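/- arXiv:1904.11748 — 6 statements merged into one kernel-verified Lean document; each statement's English description precedes it below -/
import Mathlib

section
/- Let γ be a 2n×2n real symmetric matrix and σ a 2n×2n real invertible skew-symmetric matrix. If the Hermitian matrix γ + iσ is positive semidefinite, then γ is positive definite. -/
open Matrix Complex
open scoped ComplexOrder

/-- If `γ` is a real symmetric `2n × 2n` matrix, `σ` is a real invertible skew-symmetric
`2n × 2n` matrix, and the Hermitian matrix `γ + iσ` is positive semidefinite,
then `γ` is positive definite. -/
theorem posDef_of_posSemidef_add_smul_I
    (n : ℕ) (γ σ : Matrix (Fin (2 * n)) (Fin (2 * n)) ℝ)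
    (hγ : γ.IsSymm) (hσskew : σᵀ = -σ) (hσinv : IsUnit σ)
    (h : (γ.map Complex.ofReal + Complex.I • σ.map Complex.ofReal).PosSemidef) :
    γ.PosDef := by
  have hskew : ∀ x y : Fin (2 * n) → ℝ, y ⬝ᵥ σ.mulVec x = -(x ⬝ᵥ σ.mulVec y) := by
    intro x y
    rw [Matrix.dotProduct_mulVec, ← Matrix.mulVec_transpose, hσskew, Matrix.neg_mulVec,
      neg_dotProduct, dotProduct_comm]
  have key : ∀ x y : Fin (2 * n) → ℝ,
      0 ≤ x ⬝ᵥ γ.mulVec x + y ⬝ᵥ γ.mulVec y + (y ⬝ᵥ σ.mulVec x - x ⬝ᵥ σ.mulVec y) := by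
    intro x y
    set z : Fin (2 * n) → ℂ := fun j => (x j : ℂ) + Complex.I * (y j : ℂ) with hz
    have h0 := h.dotProduct_mulVec_nonneg z
    rw [Complex.le_def] at h0
    have h1 := h0.1
    simp only [Complex.zero_re] at h1
    refine le_trans h1 (le_of_eq ?_)
    have key' : (star z ⬝ᵥ ((γ.map Complex.ofReal + Complex.I • σ.map Complex.ofReal).mulVec z)).re
        = ∑ j, ∑ k, (γ j k * (x j * x k + y j * y k) + σ j k * (y j * x k - x j * y k)) := by
      simp only [dotProduct, mulVec, Matrix.add_apply, Matrix.smul_apply, Matrix.map_apply,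
        Pi.star_apply, hz, Finset.mul_sum, Complex.re_sum]
      refine Finset.sum_congr rfl fun j _ => Finset.sum_congr rfl fun k _ => ?_
      simp only [smul_eq_mul, Complex.mul_re, Complex.mul_im, Complex.add_re, Complex.add_im,
        Complex.I_re, Complex.I_im, Complex.ofReal_re, Complex.ofReal_im, Complex.star_def,
        Complex.conj_re, Complex.conj_im]
      ring
    rw [key']
    simp only [dotProduct, mulVec, Finset.mul_sum]
    rw [← Finset.sum_sub_distrib, ← Finset.sum_add_distrib, ← Finset.sum_add_distrib]
    refine Finset.sum_congr rfl fun j _ => ?_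
    rw [← Finset.sum_sub_distrib, ← Finset.sum_add_distrib, ← Finset.sum_add_distrib]
    refine Finset.sum_congr rfl fun k _ => ?_
    ring
  have hherm : γ.IsHermitian := by
    rw [Matrix.IsHermitian, Matrix.conjTranspose]
    ext i j
    simpa using hγ.apply i j
  refine Matrix.PosDef.of_dotProduct_mulVec_pos hherm fun x hx => ?_
  simp only [star_trivial, RCLike.ofReal_real_eq_id, id]
  have hnonneg : 0 ≤ x ⬝ᵥ γ.mulVec x := by
    have := key x 0
    simpa using this
  rcases eq_or_lt_of_le hnonneg with hc | hc
  · exfalso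
    -- take y₀ := σ⁻¹ *ᵥ x, so that σ *ᵥ y₀ = x
    have hdet : IsUnit σ.det := (Matrix.isUnit_iff_isUnit_det σ).mp hσinv
    set y0 : Fin (2 * n) → ℝ := σ⁻¹.mulVec x with hy0
    have hσy0 : σ.mulVec y0 = x := by
      rw [hy0, Matrix.mulVec_mulVec, Matrix.mul_nonsing_inv σ hdet, Matrix.one_mulVec]
    have hb : 0 < x ⬝ᵥ σ.mulVec y0 := by
      rw [hσy0]
      refine lt_of_le_of_ne (Finset.sum_nonneg fun i _ => mul_self_nonneg _) ?_
      exact fun hcon => hx ((dotProduct_self_eq_zero (v := x)).mp hcon.symm)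
    have ha : 0 ≤ y0 ⬝ᵥ γ.mulVec y0 := by
      have := key 0 y0
      simpa using this
    set a := y0 ⬝ᵥ γ.mulVec y0 with hA
    set b := x ⬝ᵥ σ.mulVec y0 with hB
    have hquad : ∀ t : ℝ, 0 ≤ t ^ 2 * a - 2 * t * b := by
      intro t
      have := key x (t • y0)
      rw [hskew x (t • y0)] at this
      simp only [Matrix.mulVec_smul, dotProduct_smul, smul_dotProduct,
        smul_eq_mul, ← hc.symm] at this
      nlinarith [this]
    have hapos : (0:ℝ) < a + 1 := by linarith
    have hq := hquad (b / (a + 1))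
    rw [sub_nonneg] at hq
    field_simp at hq
    nlinarith [mul_pos hb hb, ha, hapos, sq_nonneg (a + 1)]
  · exact hc
end

section
/- Let γ be a real symmetric 2n×2n matrix and σ a real skew-symmetric 2n×2n matrix. Then the rank of the real block matrix [[γ, σ], [σᵀ, γ]] equals twice the rank of the complex matrix γ + iσ. -/
open Matrix Complex

noncomputable def realify (m : Type*) : ((m ⊕ m) → ℝ) ≃ₗ[ℝ] (m → ℂ) :=
  LinearEquiv.ofLinear
    { toFun := fun v j => (v (.inl j) : ℂ) - (v (.inr j) : ℂ) * Complex.I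
      map_add' := by intro a b; funext j; simp [Pi.add_apply]; push_cast; ring
      map_smul' := by intro c a; funext j; simp [Pi.smul_apply, Complex.real_smul]; push_cast; ring }
    { toFun := fun w => Sum.elim (fun j => (w j).re) (fun j => -(w j).im)
      map_add' := by intro a b; funext j; cases j <;> simp <;> ring
      map_smul' := by intro c a; funext j; cases j <;> simp [Complex.smul_re, Complex.smul_im] <;> ring }
    (by ext w j; simp [Complex.ext_iff])
    (by ext v j; cases j <;> simp)

theorem key (m : Type*) [Fintype m] [DecidableEq m] (γ σ : Matrix m m ℝ)
    (hγ : γ.IsSymm) (hσskew : σᵀ = -σ) (v : (m ⊕ m) → ℝ) :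
    (γ.map Complex.ofReal + Complex.I • σ.map Complex.ofReal).mulVec (realify m v)
      = realify m ((Matrix.fromBlocks γ σ σᵀ γ).mulVec v) := by
  funext j
  simp only [realify, LinearEquiv.ofLinear_apply, LinearMap.coe_mk, AddHom.coe_mk, mulVec, dotProduct,
    Matrix.add_apply, Matrix.smul_apply, map_apply, fromBlocks_apply₁₁]
  rw [hσskew]
  have h : ∀ x : m, (↑(γ j x) + Complex.I • (↑(σ j x):ℂ)) * (↑(v (Sum.inl x)) - ↑(v (Sum.inr x)) * Complex.I)
      = ((↑(γ j x * v (Sum.inl x)) + ↑(σ j x * v (Sum.inr x)) : ℂ))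
        - ((↑((-σ) j x * v (Sum.inl x)) + ↑(γ j x * v (Sum.inr x)) : ℂ)) * Complex.I := by
    intro x
    simp only [smul_eq_mul, Matrix.neg_apply]
    push_cast
    ring_nf
    simp [Complex.I_sq]
  rw [Finset.sum_congr rfl (fun x _ => h x)]
  push_cast [Fintype.sum_sum_type, fromBlocks_apply₁₁, fromBlocks_apply₁₂, fromBlocks_apply₂₁,
    fromBlocks_apply₂₂, Finset.sum_add_distrib, Finset.sum_sub_distrib, Finset.sum_mul]
  simp [add_mul, Finset.sum_add_distrib, Finset.sum_mul]


/-- For a real symmetric `γ` and real skew-symmetric `σ`, the rank of the real block matrix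
`[[γ, σ], [σᵀ, γ]]` equals twice the rank of the complex matrix `γ + iσ`. -/
theorem rank_fromBlocks_eq_two_mul_rank
    (n : ℕ) (γ σ : Matrix (Fin (2 * n)) (Fin (2 * n)) ℝ)
    (hγ : γ.IsSymm) (hσskew : σᵀ = -σ) :
    (Matrix.fromBlocks γ σ σᵀ γ).rank =
      2 * (γ.map Complex.ofReal + Complex.I • σ.map Complex.ofReal).rank := by
  classical
  set M := Matrix.fromBlocks γ σ σᵀ γ with hM
  set C := γ.map Complex.ofReal + Complex.I • σ.map Complex.ofReal with hC
  set e := realify (Fin (2 * n)) with he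
  have hcomp : (C.mulVecLin.restrictScalars ℝ).comp e.toLinearMap
      = e.toLinearMap.comp M.mulVecLin := by
    apply LinearMap.ext
    intro v
    simpa [Matrix.mulVecLin_apply] using key (Fin (2 * n)) γ σ hγ hσskew v
  have hrange : (LinearMap.range M.mulVecLin).map (e.toLinearMap)
      = Submodule.restrictScalars ℝ (LinearMap.range C.mulVecLin) := by
    rw [← LinearMap.range_comp, ← hcomp, LinearMap.range_comp, LinearEquiv.range,
      Submodule.map_top]
    ext x
    simp [LinearMap.mem_range]
  have h1 : M.rank = Module.finrank ℝ
      (Submodule.restrictScalars ℝ (LinearMap.range C.mulVecLin)) := by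
    rw [Matrix.rank, ← hrange, LinearEquiv.finrank_map_eq]
  rw [h1, Matrix.rank]
  have h2 : Module.finrank ℝ (Submodule.restrictScalars ℝ (LinearMap.range C.mulVecLin))
      = Module.finrank ℝ ℂ * Module.finrank ℂ (LinearMap.range C.mulVecLin) := by
    exact (Module.finrank_mul_finrank ℝ ℂ (LinearMap.range C.mulVecLin)).symm
  rw [h2, Complex.finrank_real_complex]
end

section
/- Combining the previous facts: for a real symmetric positive definite 2n×2n matrix γ and real skew-symmetric σ, the Hermitian matrix γ + iσ is positive semidefinite if and only if γ + σ γ⁻¹ σ is positive semidefinite. -/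
open Matrix Complex
open scoped ComplexOrder

namespace SchurAuxPSD

variable {m : Type*} [Fintype m] [DecidableEq m]

lemma map_conjT (A : Matrix m m ℝ) :
    (A.map Complex.ofReal)ᴴ = Aᴴ.map Complex.ofReal := by
  ext i j
  simp [Matrix.conjTranspose_apply, Matrix.map_apply]

lemma map_mul' (A B : Matrix m m ℝ) :
    (A * B).map Complex.ofReal = A.map Complex.ofReal * B.map Complex.ofReal := by
  ext i j
  simp [Matrix.mul_apply, Matrix.map_apply]

lemma map_one' : ((1 : Matrix m m ℝ).map Complex.ofReal) = 1 := by
  ext i j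
  simp [Matrix.one_apply, Matrix.map_apply]
  split <;> simp

lemma psd_map_iff (A : Matrix m m ℝ) :
    (A.map Complex.ofReal).PosSemidef ↔ A.PosSemidef := by
  constructor
  · intro h
    have hherm : A.IsHermitian := by
      have := h.1
      rw [IsHermitian, map_conjT] at this
      rw [Matrix.conjTranspose_eq_transpose_of_trivial] at this
      have : ∀ i j, (Aᵀ i j : ℂ) = (A i j : ℂ) := fun i j => congrFun (congrFun this i) j
      ext i j
      exact_mod_cast this i j
    refine PosSemidef.of_dotProduct_mulVec_nonneg hherm fun x => ?_
    have h2 := h.dotProduct_mulVec_nonneg (fun i => (x i : ℂ))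
    have key : star (fun i => (x i : ℂ)) ⬝ᵥ (A.map Complex.ofReal) *ᵥ (fun i => (x i : ℂ))
        = ((star x ⬝ᵥ A *ᵥ x : ℝ) : ℂ) := by
      have hst : star (fun i => (x i : ℂ)) = fun i => ((star x) i : ℂ) := by
        funext i; simp
      rw [hst]
      have hmv : (A.map Complex.ofReal) *ᵥ (fun i => (x i : ℂ))
          = fun i => ((A *ᵥ x) i : ℂ) := by
        funext i
        simp [Matrix.mulVec, dotProduct]
      rw [hmv]
      simp [dotProduct]
    rw [key] at h2
    exact_mod_cast h2
  · intro h
    obtain ⟨B, hB⟩ : ∃ B : Matrix m m ℝ, A = star B * B := by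
      open scoped MatrixOrder in exact CStarAlgebra.nonneg_iff_eq_star_mul_self.mp h.nonneg
    rw [hB, star_eq_conjTranspose, map_mul', ← map_conjT]
    exact Matrix.posSemidef_conjTranspose_mul_self _

lemma posdef_map (A : Matrix m m ℝ) (hA : A.PosDef) :
    (A.map Complex.ofReal).PosDef := by
  have hpsd : (A.map Complex.ofReal).PosSemidef := (psd_map_iff A).mpr hA.posSemidef
  have hdet : (A.map Complex.ofReal).det ≠ 0 := by
    rw [show A.map Complex.ofReal = Complex.ofRealHom.mapMatrix A from rfl,
      ← RingHom.map_det]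
    simpa using hA.det_pos.ne'
  refine PosDef.of_dotProduct_mulVec_pos hpsd.1 fun x hx => ?_
  refine (hpsd.dotProduct_mulVec_nonneg x).lt_of_ne' fun h0 => hx ?_
  have := (hpsd.dotProduct_mulVec_zero_iff x).mp h0
  exact Matrix.eq_zero_of_mulVec_eq_zero hdet this

lemma map_add' (A B : Matrix m m ℝ) :
    (A + B).map Complex.ofReal = A.map Complex.ofReal + B.map Complex.ofReal := by
  ext i j
  simp [Matrix.map_apply]

lemma inv_map (A : Matrix m m ℝ) (hA : IsUnit A.det) :
    A⁻¹.map Complex.ofReal = (A.map Complex.ofReal)⁻¹ := by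
  symm
  apply Matrix.inv_eq_right_inv
  rw [← map_mul', Matrix.mul_nonsing_inv _ hA, map_one']

end SchurAuxPSD

open SchurAuxPSD

/-- For a real symmetric positive definite `γ` and real skew-symmetric `σ`, the Hermitian
matrix `γ + iσ` is positive semidefinite iff `γ + σ γ⁻¹ σ` is positive semidefinite. -/
theorem posSemidef_add_smul_I_iff_schur
    (n : ℕ) (γ σ : Matrix (Fin (2 * n)) (Fin (2 * n)) ℝ)
    (hγ : γ.PosDef) (hσskew : σᵀ = -σ) :
    (γ.map Complex.ofReal + Complex.I • σ.map Complex.ofReal).PosSemidef ↔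
      (γ + σ * γ⁻¹ * σ).PosSemidef := by
  set G : Matrix (Fin (2 * n)) (Fin (2 * n)) ℂ := γ.map Complex.ofReal with hGdef
  set S : Matrix (Fin (2 * n)) (Fin (2 * n)) ℂ := σ.map Complex.ofReal with hSdef
  set B : Matrix (Fin (2 * n)) (Fin (2 * n)) ℂ := Complex.I • S with hBdef
  have hGpos : G.PosDef := posdef_map γ hγ
  haveI : Invertible G := hGpos.isUnit.invertible
  have hGH : Gᴴ = G := by
    rw [hGdef, map_conjT, hγ.1.eq]
  have hSH : Sᴴ = -S := by
    rw [hSdef, map_conjT, Matrix.conjTranspose_eq_transpose_of_trivial, hσskew]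
    ext i j; simp
  have hBH : Bᴴ = B := by
    rw [hBdef, Matrix.conjTranspose_smul, hSH]
    simp [Complex.star_def]
  have hST : Sᵀ = -S := by
    rw [hSdef, ← Matrix.transpose_map, hσskew]
    ext i j; simp
  have hGT : Gᵀ = G := by
    rw [hGdef, ← Matrix.transpose_map, ← Matrix.conjTranspose_eq_transpose_of_trivial, hγ.1.eq]
  set M : Matrix (Fin (2 * n)) (Fin (2 * n)) ℂ := G + B with hMdef
  set N : Matrix (Fin (2 * n) ⊕ Fin (2 * n)) (Fin (2 * n) ⊕ Fin (2 * n)) ℂ :=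
    fromBlocks G B B G with hNdef
  have hMH : M.IsHermitian := by
    rw [Matrix.IsHermitian, hMdef, Matrix.conjTranspose_add, hGH, hBH]
  have hMT : Mᵀ = G - B := by
    rw [hMdef, Matrix.transpose_add, hGT, hBdef, Matrix.transpose_smul, hST, smul_neg,
      ← sub_eq_add_neg]
  have htwo : ∀ q : ℂ, 0 ≤ 2 * q → 0 ≤ q := by
    intro q hq
    have h2inv : (0 : ℂ) ≤ 2⁻¹ := by
      rw [show ((2 : ℂ))⁻¹ = ((2⁻¹ : ℝ) : ℂ) by norm_num]
      rw [Complex.zero_le_real]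
      norm_num
    have : q = 2⁻¹ * (2 * q) := by ring
    rw [this]
    exact mul_nonneg h2inv hq
  have key : M.PosSemidef ↔ N.PosSemidef := by
    constructor
    · intro hM
      have hMTpsd := hM.transpose
      rw [hMT] at hMTpsd
      refine PosSemidef.of_dotProduct_mulVec_nonneg ?_ fun z => ?_
      · rw [Matrix.IsHermitian, hNdef, Matrix.fromBlocks_conjTranspose, hGH, hBH]
      · have hz : z = Sum.elim (z ∘ Sum.inl) (z ∘ Sum.inr) := (Sum.elim_comp_inl_inr z).symm
        set x := z ∘ Sum.inl with hx
        set y := z ∘ Sum.inr with hy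
        have h1 := hM.dotProduct_mulVec_nonneg (x + y)
        have h2 := hMTpsd.dotProduct_mulVec_nonneg (x - y)
        have hident : 2 * (star z ⬝ᵥ N *ᵥ z) =
            star (x + y) ⬝ᵥ M *ᵥ (x + y) + star (x - y) ⬝ᵥ (G - B) *ᵥ (x - y) := by
          rw [hz, hNdef, hMdef]
          simp only [Matrix.fromBlocks_mulVec, Function.star_sumElim,
            sumElim_dotProduct_sumElim, Matrix.mulVec_add, Matrix.mulVec_sub,
            Matrix.add_mulVec, Matrix.sub_mulVec, dotProduct_add, dotProduct_sub,
            add_dotProduct, sub_dotProduct, star_add, star_sub, Sum.elim_comp_inl, Sum.elim_comp_inr]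
          ring
        apply htwo
        rw [hident]
        exact add_nonneg h1 h2
    · intro hN
      refine PosSemidef.of_dotProduct_mulVec_nonneg hMH fun z => ?_
      have h1 := hN.dotProduct_mulVec_nonneg (Sum.elim z z)
      have hident : star (Sum.elim z z) ⬝ᵥ N *ᵥ (Sum.elim z z)
          = 2 * (star z ⬝ᵥ M *ᵥ z) := by
        rw [hNdef, hMdef]
        simp only [Matrix.fromBlocks_mulVec, Function.star_sumElim,
          sumElim_dotProduct_sumElim, Matrix.add_mulVec, dotProduct_add,
          add_dotProduct, Matrix.mulVec_add, star_add, Sum.elim_comp_inl, Sum.elim_comp_inr]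
        ring
      rw [hident] at h1
      exact htwo _ h1
  have hSchur : N.PosSemidef ↔ (G - Bᴴ * G⁻¹ * B).PosSemidef := by
    rw [hNdef, show (fromBlocks G B B G : Matrix _ _ ℂ) = fromBlocks G B Bᴴ G by rw [hBH]]
    exact Matrix.PosDef.fromBlocks₁₁ B G hGpos
  have hγdet : IsUnit γ.det := isUnit_iff_ne_zero.mpr hγ.det_pos.ne'
  have hinv : γ⁻¹.map Complex.ofReal = G⁻¹ := by
    rw [hGdef]; exact inv_map γ hγdet
  have hcalc : G - Bᴴ * G⁻¹ * B = (γ + σ * γ⁻¹ * σ).map Complex.ofReal := by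
    rw [hBH, hBdef, Matrix.smul_mul, Matrix.smul_mul, Matrix.mul_smul, smul_smul,
      Complex.I_mul_I, neg_one_smul, sub_neg_eq_add, map_add', map_mul', map_mul', hinv,
      hGdef, hSdef]
  rw [key, hSchur, hcalc, psd_map_iff]
end

section
/- For the explicit 8×8 matrix γ of Example 1, one has rank(γ + σ γ⁻¹ σ) = 4 and the column spaces of γ + σ γ⁻¹ σ and γ + σ̃ γ⁻¹ σ̃ intersect trivially, i.e., ran(γ + σγ⁻¹σ) ∩ ran(γ + σ̃γ⁻¹σ̃) = {0}. -/
open Matrix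

/-- The symplectic form of four modes. -/
def sympForm4 : Matrix (Fin 8) (Fin 8) ℝ :=
  !![0,1,0,0,0,0,0,0; -1,0,0,0,0,0,0,0;
     0,0,0,1,0,0,0,0; 0,0,-1,0,0,0,0,0;
     0,0,0,0,0,1,0,0; 0,0,0,0,-1,0,0,0;
     0,0,0,0,0,0,0,1; 0,0,0,0,0,0,-1,0]

/-- The partially transposed symplectic form `σ̃ = (−σ_A) ⊕ σ_B`. -/
def sympFormPT4 : Matrix (Fin 8) (Fin 8) ℝ :=
  !![0,-1,0,0,0,0,0,0; 1,0,0,0,0,0,0,0;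
     0,0,0,-1,0,0,0,0; 0,0,1,0,0,0,0,0;
     0,0,0,0,0,1,0,0; 0,0,0,0,-1,0,0,0;
     0,0,0,0,0,0,0,1; 0,0,0,0,0,0,-1,0]

/-- The Werner–Wolf bound entangled covariance matrix (Example 1). -/
def gammaWW : Matrix (Fin 8) (Fin 8) ℝ :=
  !![2,0,0,0,1,0,0,0; 0,1,0,0,0,0,0,-1;
     0,0,2,0,0,0,-1,0; 0,0,0,1,0,-1,0,0;
     1,0,0,0,2,0,0,0; 0,0,0,-1,0,4,0,0;
     0,0,-1,0,0,0,2,0; 0,-1,0,0,0,0,0,4]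

/-!
Once `γ⁻¹` is written out, `M = γ + σγ⁻¹σ` factors through `ℝ⁴` and has an invertible diagonal
top-left `4 × 4` block, so its rank is exactly 4. For the intersection, take matrices `P`, `Q`
whose rows span the left kernels of `M` and `M̃ = γ + σ̃γ⁻¹σ̃`: a vector in both ranges is killed
by `P` and by `Q`, hence by `P + Q`, which happens to be invertible.
-/

namespace Matrix

variable {R m n n' k : Type*} [Fintype n] [Fintype k]

theorem rank_eq_card_of_eq_mul_of_isUnit_submatrix [CommSemiring R] [StrongRankCondition R]
    [DecidableEq k] {A : Matrix m n R} (C : Matrix m k R) (B : Matrix k n R) (hA : A = C * B)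
    (r : k → m) (c : k → n) (hsub : IsUnit (A.submatrix r c)) : A.rank = Fintype.card k := by
  refine le_antisymm ?_ ?_
  · calc A.rank ≤ C.rank := hA ▸ rank_mul_le_left C B
      _ ≤ Fintype.card k := rank_le_card_width C
  · calc Fintype.card k = (A.submatrix r c).rank := (rank_of_isUnit _ hsub).symm
      _ ≤ A.rank := rank_submatrix_le A r c

theorem range_mulVecLin_inf_eq_bot_of_mul_eq_zero [CommSemiring R] [Fintype m] [DecidableEq m]
    [Fintype n'] {M : Matrix m n R} {N : Matrix m n' R} (P Q : Matrix k m R) (L : Matrix m k R)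
    (hP : P * M = 0) (hQ : Q * N = 0) (hL : L * (P + Q) = 1) :
    LinearMap.range M.mulVecLin ⊓ LinearMap.range N.mulVecLin = ⊥ := by
  rw [eq_bot_iff]
  rintro x ⟨⟨u, hu⟩, ⟨v, hv⟩⟩
  rw [mulVecLin_apply] at hu hv
  have hPx : P *ᵥ x = 0 := by rw [← hu, mulVec_mulVec, hP, zero_mulVec]
  have hQx : Q *ᵥ x = 0 := by rw [← hv, mulVec_mulVec, hQ, zero_mulVec]
  calc x = (L * (P + Q)) *ᵥ x := by rw [hL, one_mulVec]
    _ = 0 := by rw [← mulVec_mulVec, add_mulVec, hPx, hQx, add_zero, mulVec_zero]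

end Matrix

noncomputable def gammaWWInv : Matrix (Fin 8) (Fin 8) ℝ :=
  !![2/3, 0, 0, 0, -1/3, 0, 0, 0;
     0, 4/3, 0, 0, 0, 0, 0, 1/3;
     0, 0, 2/3, 0, 0, 0, 1/3, 0;
     0, 0, 0, 4/3, 0, 1/3, 0, 0;
     -1/3, 0, 0, 0, 2/3, 0, 0, 0;
     0, 0, 0, 1/3, 0, 1/3, 0, 0;
     0, 0, 1/3, 0, 0, 0, 2/3, 0;
     0, 1/3, 0, 0, 0, 0, 0, 1/3]

noncomputable def gammaWWSigma : Matrix (Fin 8) (Fin 8) ℝ :=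
  !![2/3, 0, 0, 0, 1, 0, -1/3, 0;
     0, 1/3, 0, 0, 0, 1/3, 0, -1;
     0, 0, 2/3, 0, -1/3, 0, -1, 0;
     0, 0, 0, 1/3, 0, -1, 0, -1/3;
     1, 0, -1/3, 0, 5/3, 0, 0, 0;
     0, 1/3, 0, -1, 0, 10/3, 0, 0;
     -1/3, 0, -1, 0, 0, 0, 5/3, 0;
     0, -1, 0, -1/3, 0, 0, 0, 10/3]

noncomputable def gammaWWSigmaPT : Matrix (Fin 8) (Fin 8) ℝ :=
  !![2/3, 0, 0, 0, 1, 0, 1/3, 0;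
     0, 1/3, 0, 0, 0, -1/3, 0, -1;
     0, 0, 2/3, 0, 1/3, 0, -1, 0;
     0, 0, 0, 1/3, 0, -1, 0, 1/3;
     1, 0, 1/3, 0, 5/3, 0, 0, 0;
     0, -1/3, 0, -1, 0, 10/3, 0, 0;
     1/3, 0, -1, 0, 0, 0, 5/3, 0;
     0, -1, 0, 1/3, 0, 0, 0, 10/3]

def gammaWWSigmaCols : Matrix (Fin 8) (Fin 4) ℝ :=
  !![2, 0, 0, 0;
     0, 1, 0, 0;
     0, 0, 2, 0;
     0, 0, 0, 1;
     3, 0, -1, 0;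
     0, 1, 0, -3;
     -1, 0, -3, 0;
     0, -3, 0, -1]

noncomputable def gammaWWSigmaRows : Matrix (Fin 4) (Fin 8) ℝ :=
  !![1/3, 0, 0, 0, 1/2, 0, -1/6, 0;
     0, 1/3, 0, 0, 0, 1/3, 0, -1;
     0, 0, 1/3, 0, -1/6, 0, -1/2, 0;
     0, 0, 0, 1/3, 0, -1, 0, -1/3]

def gammaWWSigmaAnnih : Matrix (Fin 8) (Fin 8) ℝ :=
  !![10, 0, 0, 0, -6, 0, 2, 0;
     0, 10, 0, 0, 0, -1, 0, 3;
     0, 0, 10, 0, 2, 0, 6, 0;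
     0, 0, 0, 10, 0, 3, 0, 1;
     -6, 0, 2, 0, 4, 0, 0, 0;
     0, -1, 0, 3, 0, 1, 0, 0;
     2, 0, 6, 0, 0, 0, 4, 0;
     0, 3, 0, 1, 0, 0, 0, 1]

def gammaWWSigmaPTAnnih : Matrix (Fin 8) (Fin 8) ℝ :=
  !![10, 0, 0, 0, -6, 0, -2, 0;
     0, 10, 0, 0, 0, 1, 0, 3;
     0, 0, 10, 0, -2, 0, 6, 0;
     0, 0, 0, 10, 0, 3, 0, -1;
     -6, 0, -2, 0, 4, 0, 0, 0;
     0, 1, 0, 3, 0, 1, 0, 0;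
     -2, 0, 6, 0, 0, 0, 4, 0;
     0, 3, 0, -1, 0, 0, 0, 1]

noncomputable def gammaWWAnnihSumInv : Matrix (Fin 8) (Fin 8) ℝ :=
  !![1/2, 0, 0, 0, 3/4, 0, 0, 0;
     0, 1/2, 0, 0, 0, 0, 0, -3/2;
     0, 0, 1/2, 0, 0, 0, -3/4, 0;
     0, 0, 0, 1/2, 0, -3/2, 0, 0;
     3/4, 0, 0, 0, 5/4, 0, 0, 0;
     0, 0, 0, -3/2, 0, 5, 0, 0;
     0, 0, -3/4, 0, 0, 0, 5/4, 0;
     0, -3/2, 0, 0, 0, 0, 0, 5]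

theorem gammaWW_inv : gammaWW⁻¹ = gammaWWInv := by
  refine inv_eq_right_inv ?_
  rw [← ext_iff]
  simp [gammaWW, gammaWWInv, Fin.forall_fin_succ, one_apply]
  norm_num

theorem gammaWW_add_sympForm4_mul_inv_mul :
    gammaWW + sympForm4 * gammaWW⁻¹ * sympForm4 = gammaWWSigma := by
  rw [gammaWW_inv, ← ext_iff]
  simp [gammaWW, gammaWWInv, sympForm4, gammaWWSigma, Fin.forall_fin_succ]
  norm_num

theorem gammaWW_add_sympFormPT4_mul_inv_mul :
    gammaWW + sympFormPT4 * gammaWW⁻¹ * sympFormPT4 = gammaWWSigmaPT := by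
  rw [gammaWW_inv, ← ext_iff]
  simp [gammaWW, gammaWWInv, sympFormPT4, gammaWWSigmaPT, Fin.forall_fin_succ]
  norm_num

theorem gammaWWSigma_eq_cols_mul_rows : gammaWWSigma = gammaWWSigmaCols * gammaWWSigmaRows := by
  rw [← ext_iff]
  simp [gammaWWSigma, gammaWWSigmaCols, gammaWWSigmaRows, Fin.forall_fin_succ]
  norm_num

theorem isUnit_gammaWWSigma_submatrix_castAdd :
    IsUnit (gammaWWSigma.submatrix (Fin.castAdd 4) (Fin.castAdd 4)) := by
  have hdiag : gammaWWSigma.submatrix (Fin.castAdd 4) (Fin.castAdd 4) =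
      diagonal ![2/3, 1/3, 2/3, 1/3] := by
    rw [← ext_iff]
    simp [gammaWWSigma, Fin.forall_fin_succ]
  rw [hdiag, isUnit_diagonal, Pi.isUnit_iff]
  intro i
  fin_cases i <;> norm_num

theorem gammaWWSigmaAnnih_mul : gammaWWSigmaAnnih * gammaWWSigma = 0 := by
  rw [← ext_iff]
  simp [gammaWWSigmaAnnih, gammaWWSigma, Fin.forall_fin_succ]
  norm_num

theorem gammaWWSigmaPTAnnih_mul : gammaWWSigmaPTAnnih * gammaWWSigmaPT = 0 := by
  rw [← ext_iff]
  simp [gammaWWSigmaPTAnnih, gammaWWSigmaPT, Fin.forall_fin_succ]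
  norm_num

theorem gammaWWAnnihSumInv_mul :
    gammaWWAnnihSumInv * (gammaWWSigmaAnnih + gammaWWSigmaPTAnnih) = 1 := by
  rw [← ext_iff]
  simp [gammaWWAnnihSumInv, gammaWWSigmaAnnih, gammaWWSigmaPTAnnih,
    Fin.forall_fin_succ, one_apply]
  norm_num

/-- `rank(γ + σγ⁻¹σ) = 4` and the column spaces of `γ + σγ⁻¹σ` and `γ + σ̃γ⁻¹σ̃`
intersect trivially; i.e. `γ` is a minimal PPT covariance matrix. -/
theorem gammaWW_minimal :
    (gammaWW + sympForm4 * gammaWW⁻¹ * sympForm4).rank = 4 ∧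
    LinearMap.range (gammaWW + sympForm4 * gammaWW⁻¹ * sympForm4).mulVecLin ⊓
      LinearMap.range (gammaWW + sympFormPT4 * gammaWW⁻¹ * sympFormPT4).mulVecLin = ⊥ := by
  rw [gammaWW_add_sympForm4_mul_inv_mul, gammaWW_add_sympFormPT4_mul_inv_mul]
  exact ⟨rank_eq_card_of_eq_mul_of_isUnit_submatrix _ _ gammaWWSigma_eq_cols_mul_rows _ _
      isUnit_gammaWWSigma_submatrix_castAdd,
    range_mulVecLin_inf_eq_bot_of_mul_eq_zero _ _ _
      gammaWWSigmaAnnih_mul gammaWWSigmaPTAnnih_mul gammaWWAnnihSumInv_mul⟩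
end

section
/- For real parameters with β₁ ≠ β₂, β₁β₂ ≠ −1, α₁,…,α₄ ≠ 0 and α₅,…,α₈ > 0, define diagonal/off-diagonal entries by equations (r11)–(r46) of the paper. Then the resulting 4×4 matrices γ₁' (with entries γ₁₁, γ₃₃, γ₅₅, γ₇₇ on the diagonal and γ₁₅, γ₃₇ off-diagonal) and γ₂' (with entries γ₂₂, γ₄₄, γ₆₆, γ₈₈ on the diagonal and γ₂₈, γ₄₆ off-diagonal) satisfy: γ₂' is positive definite, γ₁' − γ₂'⁻¹ is positive semidefinite, and rank(γ₁' − γ₂'⁻¹) = 2. -/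
open Matrix

/-- Auxiliary: a binary quadratic form with positive leading coefficient and positive
determinant is positive on nonzero vectors. -/
lemma quad_pos_aux (a b c x y : ℝ) (ha : 0 < a) (hd : 0 < a * c - b ^ 2)
    (hxy : x ≠ 0 ∨ y ≠ 0) : 0 < a * x ^ 2 + 2 * b * x * y + c * y ^ 2 := by
  rcases eq_or_ne y 0 with hy | hy
  · subst hy
    rcases hxy with hx | hx
    · have : 0 < x ^ 2 := by positivity
      nlinarith
    · exact absurd rfl hx
  · have h1 : 0 ≤ (a * x + b * y) ^ 2 := sq_nonneg _
    have h2 : 0 < (a * c - b ^ 2) * y ^ 2 := by positivity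
    nlinarith

set_option maxHeartbeats 2000000 in
/-- For parameters `β₁ ≠ β₂`, `β₁β₂ ≠ −1`, `α₁,…,α₄ ≠ 0`, `α₅,…,α₈ > 0`, the matrices
`γ₁'` and `γ₂'` built from the entries (r11)–(r46) satisfy: `γ₂'` is positive definite,
`γ₁' − γ₂'⁻¹` is positive semidefinite, and `rank(γ₁' − γ₂'⁻¹) = 2`. -/
theorem parametrized_family_properties
    (β₁ β₂ α₁ α₂ α₃ α₄ α₅ α₆ α₇ α₈ : ℝ)
    (hβ : β₁ ≠ β₂) (hββ : β₁ * β₂ ≠ -1)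
    (h₁ : α₁ ≠ 0) (h₂ : α₂ ≠ 0) (h₃ : α₃ ≠ 0) (h₄ : α₄ ≠ 0)
    (h₅ : 0 < α₅) (h₆ : 0 < α₆) (h₇ : 0 < α₇) (h₈ : 0 < α₈) :
    let γ₁₁ := α₅ + (1 + β₁ ^ 2) * α₁ ^ 2
    let γ₂₂ := (1 + α₈) / (α₅ * α₈)
    let γ₃₃ := α₆ + (1 + β₁ ^ 2) * α₂ ^ 2
    let γ₄₄ := (1 + α₇) / (α₆ * α₇)
    let γ₅₅ := (β₁ - β₂) ^ 2 * α₂ ^ 2 * α₃ ^ 2 * (1 + α₇) / α₆ + (1 + β₂ ^ 2) * α₃ ^ 2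
    let γ₆₆ := α₆ / (α₇ * (β₁ - β₂) ^ 2 * α₂ ^ 2 * α₃ ^ 2)
    let γ₇₇ := (β₂ - β₁) ^ 2 * α₁ ^ 2 * α₄ ^ 2 * (1 + α₈) / α₅ + (1 + β₂ ^ 2) * α₄ ^ 2
    let γ₈₈ := α₅ / (α₈ * (β₂ - β₁) ^ 2 * α₁ ^ 2 * α₄ ^ 2)
    let γ₁₅ := (1 + β₁ * β₂) * α₁ * α₃
    let γ₂₈ := 1 / ((β₁ - β₂) * α₁ * α₄ * α₈)
    let γ₃₇ := (1 + β₁ * β₂) * α₂ * α₄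
    let γ₄₆ := 1 / ((β₂ - β₁) * α₂ * α₃ * α₇)
    let γ₁' : Matrix (Fin 4) (Fin 4) ℝ :=
      !![γ₁₁, 0, γ₁₅, 0; 0, γ₃₃, 0, γ₃₇; γ₁₅, 0, γ₅₅, 0; 0, γ₃₇, 0, γ₇₇]
    let γ₂' : Matrix (Fin 4) (Fin 4) ℝ :=
      !![γ₂₂, 0, 0, γ₂₈; 0, γ₄₄, γ₄₆, 0; 0, γ₄₆, γ₆₆, 0; γ₂₈, 0, 0, γ₈₈]
    γ₂'.PosDef ∧ (γ₁' - γ₂'⁻¹).PosSemidef ∧ (γ₁' - γ₂'⁻¹).rank = 2 := by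
  intro γ₁₁ γ₂₂ γ₃₃ γ₄₄ γ₅₅ γ₆₆ γ₇₇ γ₈₈ γ₁₅ γ₂₈ γ₃₇ γ₄₆ γ₁' γ₂'
  have hb : β₁ - β₂ ≠ 0 := sub_ne_zero.mpr hβ
  have hb' : β₂ - β₁ ≠ 0 := sub_ne_zero.mpr (Ne.symm hβ)
  have h₅' : α₅ ≠ 0 := h₅.ne'
  have h₆' : α₆ ≠ 0 := h₆.ne'
  have h₇' : α₇ ≠ 0 := h₇.ne'
  have h₈' : α₈ ≠ 0 := h₈.ne'
  -- the explicit inverse of γ₂'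
  have hA : γ₂' * !![α₅, 0, 0, (β₂ - β₁) * α₁ * α₄; 0, α₆, (β₁ - β₂) * α₂ * α₃, 0;
      0, (β₁ - β₂) * α₂ * α₃, ((β₁ - β₂) * α₂ * α₃) ^ 2 * (1 + α₇) / α₆, 0;
      (β₂ - β₁) * α₁ * α₄, 0, 0, ((β₂ - β₁) * α₁ * α₄) ^ 2 * (1 + α₈) / α₅] = 1 := by
    ext i j
    fin_cases i <;> fin_cases j <;>
      simp [γ₂', γ₂₂, γ₂₈, γ₄₄, γ₄₆, γ₆₆, γ₈₈, Matrix.mul_apply, Fin.sum_univ_four,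
        Matrix.one_apply] <;> field_simp <;> ring
  have hInv : γ₂'⁻¹ = !![α₅, 0, 0, (β₂ - β₁) * α₁ * α₄; 0, α₆, (β₁ - β₂) * α₂ * α₃, 0;
      0, (β₁ - β₂) * α₂ * α₃, ((β₁ - β₂) * α₂ * α₃) ^ 2 * (1 + α₇) / α₆, 0;
      (β₂ - β₁) * α₁ * α₄, 0, 0, ((β₂ - β₁) * α₁ * α₄) ^ 2 * (1 + α₈) / α₅] :=
    Matrix.inv_eq_right_inv hA
  -- the factorization γ₁' - γ₂'⁻¹ = V * Vᴴ
  have hW : (!![β₁ * α₁, α₁; α₂, -(β₁ * α₂); β₂ * α₃, α₃; α₄, -(β₂ * α₄)] :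
        Matrix (Fin 4) (Fin 2) ℝ)ᴴ =
      !![β₁ * α₁, α₂, β₂ * α₃, α₄; α₁, -(β₁ * α₂), α₃, -(β₂ * α₄)] := by
    ext i j
    fin_cases i <;> fin_cases j <;> simp [Matrix.conjTranspose_apply]
  have hfac : γ₁' - γ₂'⁻¹ =
      (!![β₁ * α₁, α₁; α₂, -(β₁ * α₂); β₂ * α₃, α₃; α₄, -(β₂ * α₄)] :
        Matrix (Fin 4) (Fin 2) ℝ) *
      (!![β₁ * α₁, α₁; α₂, -(β₁ * α₂); β₂ * α₃, α₃; α₄, -(β₂ * α₄)] :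
        Matrix (Fin 4) (Fin 2) ℝ)ᴴ := by
    rw [hInv, hW]
    ext i j
    fin_cases i <;> fin_cases j <;>
      simp [γ₁', γ₁₁, γ₁₅, γ₃₃, γ₃₇, γ₅₅, γ₇₇, Matrix.mul_apply, Fin.sum_univ_two]
    all_goals first
    | (field_simp; ring)
    | ring
  refine ⟨?_, ?_, ?_⟩
  · -- γ₂' positive definite
    rw [Matrix.posDef_iff_dotProduct_mulVec]
    constructor
    · ext i j
      fin_cases i <;> fin_cases j <;>
        simp [γ₂', Matrix.conjTranspose_apply]
    · intro x hx
      have hxne : x 0 ≠ 0 ∨ x 1 ≠ 0 ∨ x 2 ≠ 0 ∨ x 3 ≠ 0 := by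
        by_contra hc
        push_neg at hc
        apply hx
        funext i
        fin_cases i <;> simp [hc.1, hc.2.1, hc.2.2.1, hc.2.2.2]
      have hQ : dotProduct (star x) (γ₂' *ᵥ x)
          = (γ₂₂ * x 0 ^ 2 + 2 * γ₂₈ * x 0 * x 3 + γ₈₈ * x 3 ^ 2)
            + (γ₄₄ * x 1 ^ 2 + 2 * γ₄₆ * x 1 * x 2 + γ₆₆ * x 2 ^ 2) := by
        simp [γ₂', dotProduct, Matrix.mulVec, Fin.sum_univ_four]
        ring
      have hd1 : γ₂₂ * γ₈₈ - γ₂₈ ^ 2 = 1 / (α₈ * (β₁ - β₂) ^ 2 * α₁ ^ 2 * α₄ ^ 2) := by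
        simp only [γ₂₂, γ₈₈, γ₂₈]
        field_simp
        ring
      have hd2 : γ₄₄ * γ₆₆ - γ₄₆ ^ 2 = 1 / (α₇ * (β₁ - β₂) ^ 2 * α₂ ^ 2 * α₃ ^ 2) := by
        simp only [γ₄₄, γ₆₆, γ₄₆]
        field_simp
        ring
      have hp22 : 0 < γ₂₂ := by simp only [γ₂₂]; positivity
      have hp44 : 0 < γ₄₄ := by simp only [γ₄₄]; positivity
      have hpd1 : 0 < γ₂₂ * γ₈₈ - γ₂₈ ^ 2 := by rw [hd1]; positivity
      have hpd2 : 0 < γ₄₄ * γ₆₆ - γ₄₆ ^ 2 := by rw [hd2]; positivity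
      have hQ1 : 0 ≤ γ₂₂ * x 0 ^ 2 + 2 * γ₂₈ * x 0 * x 3 + γ₈₈ * x 3 ^ 2 := by
        rcases eq_or_ne (x 0) 0 with h0 | h0
        · rcases eq_or_ne (x 3) 0 with h3 | h3
          · simp [h0, h3]
          · exact le_of_lt (quad_pos_aux _ _ _ _ _ hp22 hpd1 (Or.inr h3))
        · exact le_of_lt (quad_pos_aux _ _ _ _ _ hp22 hpd1 (Or.inl h0))
      have hQ2 : 0 ≤ γ₄₄ * x 1 ^ 2 + 2 * γ₄₆ * x 1 * x 2 + γ₆₆ * x 2 ^ 2 := by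
        rcases eq_or_ne (x 1) 0 with h0 | h0
        · rcases eq_or_ne (x 2) 0 with h3 | h3
          · simp [h0, h3]
          · exact le_of_lt (quad_pos_aux _ _ _ _ _ hp44 hpd2 (Or.inr h3))
        · exact le_of_lt (quad_pos_aux _ _ _ _ _ hp44 hpd2 (Or.inl h0))
      rw [hQ]
      rcases hxne with h | h | h | h
      · have := quad_pos_aux γ₂₂ γ₂₈ γ₈₈ (x 0) (x 3) hp22 hpd1 (Or.inl h); linarith
      · have := quad_pos_aux γ₄₄ γ₄₆ γ₆₆ (x 1) (x 2) hp44 hpd2 (Or.inl h); linarith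
      · have := quad_pos_aux γ₄₄ γ₄₆ γ₆₆ (x 1) (x 2) hp44 hpd2 (Or.inr h); linarith
      · have := quad_pos_aux γ₂₂ γ₂₈ γ₈₈ (x 0) (x 3) hp22 hpd1 (Or.inr h); linarith
  · rw [hfac]
    exact Matrix.posSemidef_self_mul_conjTranspose _
  · rw [hfac, Matrix.rank_self_mul_conjTranspose]
    refine le_antisymm (Matrix.rank_le_card_width _) ?_
    -- lower bound: the top 2×2 submatrix is invertible
    have hPV : (!![1, 0, 0, 0; 0, 1, 0, 0] : Matrix (Fin 2) (Fin 4) ℝ) *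
        !![β₁ * α₁, α₁; α₂, -(β₁ * α₂); β₂ * α₃, α₃; α₄, -(β₂ * α₄)] =
        !![β₁ * α₁, α₁; α₂, -(β₁ * α₂)] := by
      ext i j
      fin_cases i <;> fin_cases j <;>
        simp [Matrix.mul_apply, Fin.sum_univ_four]
    have hdet : (!![β₁ * α₁, α₁; α₂, -(β₁ * α₂)] : Matrix (Fin 2) (Fin 2) ℝ).det ≠ 0 := by
      rw [Matrix.det_fin_two_of]
      have h1 : 0 < 1 + β₁ ^ 2 := by positivity
      have h2 : α₁ * α₂ * (1 + β₁ ^ 2) ≠ 0 := by positivity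
      intro h
      apply h2
      nlinarith
    have hunit : IsUnit (!![β₁ * α₁, α₁; α₂, -(β₁ * α₂)] : Matrix (Fin 2) (Fin 2) ℝ) := by
      rw [Matrix.isUnit_iff_isUnit_det]
      exact isUnit_iff_ne_zero.mpr hdet
    have h2 : (!![β₁ * α₁, α₁; α₂, -(β₁ * α₂)] : Matrix (Fin 2) (Fin 2) ℝ).rank = 2 :=
      Matrix.rank_of_isUnit _ hunit
    have hrank2 : ((!![1, 0, 0, 0; 0, 1, 0, 0] : Matrix (Fin 2) (Fin 4) ℝ) *
        !![β₁ * α₁, α₁; α₂, -(β₁ * α₂); β₂ * α₃, α₃; α₄, -(β₂ * α₄)]).rank = 2 := by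
      rw [hPV]; exact h2
    have hle := Matrix.rank_mul_le_right (!![1, 0, 0, 0; 0, 1, 0, 0] : Matrix (Fin 2) (Fin 4) ℝ)
      !![β₁ * α₁, α₁; α₂, -(β₁ * α₂); β₂ * α₃, α₃; α₄, -(β₂ * α₄)]
    omega
end

section
/- Let γ be a real symmetric 2(n+m)×2(n+m) matrix, and suppose there exist real symmetric matrices γ_A (2n×2n) and γ_B (2m×2m) with γ_A + iσ_A ≥ 0, γ_B + iσ_B ≥ 0, and γ ≥ γ_A ⊕ γ_B. Then γ + iσ̃ ≥ 0 where σ̃ = (−σ_A) ⊕ σ_B; i.e., every separable Gaussian covariance matrix is PPT. -/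
open Matrix Complex
open scoped ComplexOrder

/-- The standard symplectic form on `2n` dimensions, a direct sum of `n` blocks
`[[0,1],[−1,0]]`. -/
def sympForm (n : ℕ) : Matrix (Fin (2 * n)) (Fin (2 * n)) ℝ := fun i j =>
  if i.val % 2 = 0 ∧ j.val = i.val + 1 then 1
  else if j.val % 2 = 0 ∧ i.val = j.val + 1 then -1
  else 0

lemma sympForm_transpose (n : ℕ) : (sympForm n)ᵀ = -(sympForm n) := by
  ext i j
  simp only [Matrix.transpose_apply, Matrix.neg_apply, sympForm]
  split_ifs with h1 h2
  · exfalso; omega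
  · norm_num
  · norm_num
  · norm_num

lemma map_psd {k : Type*} [Fintype k] [DecidableEq k] {A : Matrix k k ℝ}
    (h : A.PosSemidef) : (A.map Complex.ofReal).PosSemidef := by
  obtain ⟨B, rfl⟩ : ∃ B : Matrix k k ℝ, A = Bᴴ * B := by
    open scoped MatrixOrder Matrix.Norms.L2Operator in
    exact CStarAlgebra.nonneg_iff_eq_star_mul_self.mp h.nonneg
  have hmap : (Bᴴ * B).map Complex.ofReal
      = (B.map Complex.ofReal)ᴴ * (B.map Complex.ofReal) := by
    rw [show (Complex.ofReal : ℝ → ℂ) = ⇑Complex.ofRealHom from rfl,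
      Matrix.map_mul,
      Matrix.conjTranspose_map (⇑Complex.ofRealHom)
        (fun x => (Complex.conj_ofReal x).symm)]
  rw [hmap]
  exact Matrix.posSemidef_conjTranspose_mul_self _

lemma fromBlocks_psd {k l : Type*} [Fintype k] [Fintype l] [DecidableEq k] [DecidableEq l]
    {A : Matrix k k ℂ} {D : Matrix l l ℂ} (hA : A.PosSemidef) (hD : D.PosSemidef) :
    (Matrix.fromBlocks A 0 0 D).PosSemidef := by
  refine Matrix.PosSemidef.of_dotProduct_mulVec_nonneg ?_ ?_
  · rw [Matrix.IsHermitian, Matrix.fromBlocks_conjTranspose, hA.1.eq, hD.1.eq]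
    simp
  · intro x
    have := hA.dotProduct_mulVec_nonneg (x ∘ Sum.inl)
    have := hD.dotProduct_mulVec_nonneg (x ∘ Sum.inr)
    have hx : x = Sum.elim (x ∘ Sum.inl) (x ∘ Sum.inr) := by
      ext (i | i) <;> rfl
    rw [hx, Matrix.fromBlocks_mulVec]
    simp only [Matrix.zero_mulVec, add_zero, zero_add]
    rw [show star (Sum.elim (x ∘ Sum.inl) (x ∘ Sum.inr))
        = Sum.elim (star (x ∘ Sum.inl)) (star (x ∘ Sum.inr)) by ext (i | i) <;> rfl]
    rw [sumElim_dotProduct_sumElim]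
    exact add_nonneg ‹_› ‹_›

/-- Every separable Gaussian covariance matrix is PPT: if `γ ≥ γ_A ⊕ γ_B` with
`γ_A + iσ_A ≥ 0` and `γ_B + iσ_B ≥ 0`, then `γ + iσ̃ ≥ 0` where `σ̃ = (−σ_A) ⊕ σ_B`. -/
theorem separable_implies_PPT
    (n m : ℕ)
    (γ : Matrix (Fin (2 * n) ⊕ Fin (2 * m)) (Fin (2 * n) ⊕ Fin (2 * m)) ℝ)
    (γA : Matrix (Fin (2 * n)) (Fin (2 * n)) ℝ)
    (γB : Matrix (Fin (2 * m)) (Fin (2 * m)) ℝ)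
    (hγ : γ.IsSymm) (hA : γA.IsSymm) (hB : γB.IsSymm)
    (hApsd : (γA.map Complex.ofReal + Complex.I • (sympForm n).map Complex.ofReal).PosSemidef)
    (hBpsd : (γB.map Complex.ofReal + Complex.I • (sympForm m).map Complex.ofReal).PosSemidef)
    (hge : (γ - Matrix.fromBlocks γA 0 0 γB).PosSemidef) :
    (γ.map Complex.ofReal +
      Complex.I • (Matrix.fromBlocks (-(sympForm n)) 0 0 (sympForm m)).map
        Complex.ofReal).PosSemidef := by
  -- γA - iσA is PSD (transpose of γA + iσA)
  have hA' : (γA.map Complex.ofReal + Complex.I • ((-(sympForm n)).map Complex.ofReal)).PosSemidef := by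
    have := hApsd.transpose
    have heq : (γA.map Complex.ofReal + Complex.I • (sympForm n).map Complex.ofReal)ᵀ
        = γA.map Complex.ofReal + Complex.I • ((-(sympForm n)).map Complex.ofReal) := by
      rw [Matrix.transpose_add, Matrix.transpose_smul, ← Matrix.transpose_map,
        ← Matrix.transpose_map, hA.eq, sympForm_transpose]
    rwa [heq] at this
  -- block diagonal PSD
  have hblock : (Matrix.fromBlocks
      (γA.map Complex.ofReal + Complex.I • ((-(sympForm n)).map Complex.ofReal)) 0 0
      (γB.map Complex.ofReal + Complex.I • (sympForm m).map Complex.ofReal)).PosSemidef :=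
    fromBlocks_psd hA' hBpsd
  have hdiff : ((γ - Matrix.fromBlocks γA 0 0 γB).map Complex.ofReal).PosSemidef :=
    map_psd hge
  have := hdiff.add hblock
  convert this using 1
  ext (i | i) (j | j) <;>
    simp [Matrix.fromBlocks, Matrix.map_apply, Matrix.add_apply, Matrix.sub_apply,
      Matrix.smul_apply, Complex.ofReal_sub] <;> ring
end
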